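/- For any string T of length n ≥ 2, el(T)/er(T) ≤ √(2n); equivalently, el(T)² ≤ 2n · er(T)². In particular el(T)/er(T) ∈ O(√n). -/

import Mathlib

open Finset

variable {α : Type*}

/-- Number of occurrences of `S` in `T`: positions `i` with `T[i..i+|S|-1] = S`. -/
def occ [DecidableEq α] (T S : List α) : ℕ :=
  ((Finset.range (T.length + 1)).filter fun i => (T.drop i).take S.length = S).card

/-- `S` is a maximal repeat of `T`. -/
def MaxRepeat [DecidableEq α] (T S : List α) : Prop :=
  2 ≤ occ T S ∧ ∀ a : α, occ T (a :: S) < occ T S ∧ occ T (S ++ [a]) < occ T S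

instance [DecidableEq α] [Fintype α] (T S : List α) : Decidable (MaxRepeat T S) := by
  unfold MaxRepeat; infer_instance

/-- The finite set of maximal repeats of `T`. -/
def MRset [DecidableEq α] [Fintype α] (T : List α) : Finset (List α) :=
  (T.tails.flatMap List.inits).toFinset.filter fun S => MaxRepeat T S

/-- Number of right extensions of `S` in `T`. -/
def rext [DecidableEq α] [Fintype α] (T S : List α) : ℕ :=
  (Finset.univ.filter fun a : α => (S ++ [a]) <:+: T).card

/-- Number of left extensions of `S` in `T`. -/
def lext [DecidableEq α] [Fintype α] (T S : List α) : ℕ :=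
  (Finset.univ.filter fun a : α => (a :: S) <:+: T).card

/-- Total number of right extensions of maximal repeats of `T`. -/
def er [DecidableEq α] [Fintype α] (T : List α) : ℕ := ∑ S ∈ MRset T, rext T S

/-- Total number of left extensions of maximal repeats of `T`. -/
def el [DecidableEq α] [Fintype α] (T : List α) : ℕ := ∑ S ∈ MRset T, lext T S

/-! The empty string is a maximal repeat whose right extensions are the `σ` letters of `T`, so
`σ ≤ er T`; every maximal repeat has a right extension and at most `σ` left extensions, so
`el T ≤ σ * er T`. Reversal exchanges left and right, so `el T = er T.reverse ≤ 2n` by the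
suffix-tree bound: extending each `S ++ [a]` (with `S` a maximal repeat) to the right while its
occurrences do not change ends, injectively, at a nonempty suffix of `T` or at an infix with two
right extensions, and there are at most `n` of each. Hence `el² ≤ σ * er * 2n ≤ 2n * er²`. -/

section Occurrences

variable [DecidableEq α] {T S S' : List α} {i : ℕ}

def infixes (T : List α) : Finset (List α) := (T.tails.flatMap List.inits).toFinset

theorem mem_infixes : S ∈ infixes T ↔ S <:+: T := by
  simp only [infixes, List.mem_toFinset, List.mem_flatMap, List.mem_tails, List.mem_inits,
    List.infix_iff_prefix_suffix]
  exact ⟨fun ⟨t, ht, hS⟩ => ⟨t, hS, ht⟩, fun ⟨t, hS, ht⟩ => ⟨t, ht, hS⟩⟩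

def occSet (T S : List α) : Finset ℕ :=
  (range (T.length + 1)).filter fun i => (T.drop i).take S.length = S

theorem occ_eq_card_occSet (T S : List α) : occ T S = (occSet T S).card := rfl

theorem mem_occSet : i ∈ occSet T S ↔ i ≤ T.length ∧ S <+: T.drop i := by
  simp [occSet, List.prefix_iff_eq_take, eq_comm]

theorem mem_occSet_iff_exists_append :
    i ∈ occSet T S ↔ ∃ A B, A ++ S ++ B = T ∧ A.length = i := by
  rw [mem_occSet]
  constructor
  · rintro ⟨hi, B, hB⟩
    exact ⟨T.take i, B, by rw [List.append_assoc, hB, List.take_append_drop], by simpa⟩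
  · rintro ⟨A, B, rfl, rfl⟩
    simp

theorem occ_pos_iff : 0 < occ T S ↔ S <:+: T := by
  simp only [occ_eq_card_occSet, card_pos, Finset.Nonempty, mem_occSet_iff_exists_append]
  exact ⟨fun ⟨_, A, B, h, _⟩ => ⟨A, B, h⟩, fun ⟨A, B, h⟩ => ⟨_, A, B, h, rfl⟩⟩

theorem add_length_le_of_mem_occSet (h : i ∈ occSet T S) : i + S.length ≤ T.length := by
  obtain ⟨A, B, rfl, rfl⟩ := mem_occSet_iff_exists_append.mp h
  simp

theorem suffix_of_mem_occSet (h : i ∈ occSet T S) (he : i + S.length = T.length) : S <:+ T := by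
  obtain ⟨-, hp⟩ := mem_occSet.mp h
  exact hp.eq_of_length (by simp; omega) ▸ List.drop_suffix i T

theorem add_length_lt_of_mem_occSet (h : i ∈ occSet T S) (hS : ¬ S <:+ T) :
    i + S.length < T.length :=
  (add_length_le_of_mem_occSet h).lt_of_ne fun he => hS (suffix_of_mem_occSet h he)

theorem exists_mem_occSet_append_singleton (h : i ∈ occSet T S)
    (hlt : i + S.length < T.length) : ∃ a, i ∈ occSet T (S ++ [a]) := by
  obtain ⟨hi, u, hu⟩ := mem_occSet.mp h
  cases u with
  | nil =>
    have := congrArg List.length hu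
    simp at this
    omega
  | cons a u => exact ⟨a, mem_occSet.mpr ⟨hi, u, by simpa using hu⟩⟩

theorem getElem?_eq_of_mem_occSet_append_singleton {a : α} (h : i ∈ occSet T (S ++ [a])) :
    T[i + S.length]? = some a := by
  obtain ⟨A, B, rfl, rfl⟩ := mem_occSet_iff_exists_append.mp h
  simp

theorem occSet_subset_of_prefix (h : S' <+: S) : occSet T S ⊆ occSet T S' := fun i hi => by
  rw [mem_occSet] at hi ⊢
  exact ⟨hi.1, h.trans hi.2⟩

theorem occ_le_of_prefix (h : S' <+: S) : occ T S ≤ occ T S' :=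
  card_le_card (occSet_subset_of_prefix h)

theorem occ_nil (T : List α) : occ T [] = T.length + 1 := by
  simp [occ]

theorem occ_le_length (hS : S ≠ []) : occ T S ≤ T.length := by
  refine (card_le_card fun i hi => ?_).trans (card_range T.length).le
  have := add_length_le_of_mem_occSet hi
  have := List.length_pos_iff.mpr hS
  simp only [mem_range]
  omega

theorem occ_le_occ_reverse (T S : List α) : occ T S ≤ occ T.reverse S.reverse := by
  refine card_le_card_of_injOn (fun i => T.length - S.length - i) (fun i hi => ?_)
    (fun i hi j hj hij => ?_)
  · obtain ⟨A, B, rfl, rfl⟩ := mem_occSet_iff_exists_append.mp hi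
    refine mem_occSet_iff_exists_append.mpr ⟨B.reverse, A.reverse, by simp, ?_⟩
    simp
    omega
  · have := add_length_le_of_mem_occSet hi
    have := add_length_le_of_mem_occSet hj
    simp only at hij
    omega

@[simp]
theorem occ_reverse (T S : List α) : occ T.reverse S.reverse = occ T S :=
  le_antisymm (by simpa using occ_le_occ_reverse T.reverse S.reverse) (occ_le_occ_reverse T S)

theorem maxRepeat_reverse_iff : MaxRepeat T.reverse S.reverse ↔ MaxRepeat T S := by
  have hcons (a : α) : a :: S.reverse = (S ++ [a]).reverse := by simp
  have hconcat (a : α) : S.reverse ++ [a] = (a :: S).reverse := by simp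
  simp only [MaxRepeat, hcons, hconcat, occ_reverse, and_comm]

end Occurrences

section MaximalRepeats

variable [DecidableEq α] [Fintype α] {T S : List α}

theorem mem_MRset : S ∈ MRset T ↔ MaxRepeat T S := by
  rw [MRset, ← infixes, mem_filter, mem_infixes, and_iff_right_iff_imp]
  exact fun h => occ_pos_iff.mp (by have := h.1; omega)

theorem nil_mem_MRset (hT : T ≠ []) : [] ∈ MRset T := by
  have hlt (a : α) : occ T [a] < occ T [] :=
    (occ_le_length (List.cons_ne_nil a [])).trans_lt (occ_nil T ▸ Nat.lt_succ_self _)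
  refine mem_MRset.mpr ⟨?_, fun a => ⟨hlt a, hlt a⟩⟩
  rw [occ_nil]
  have := List.length_pos_iff.mpr hT
  omega

theorem rext_pos_of_two_le_occ (h : 2 ≤ occ T S) : 0 < rext T S := by
  obtain ⟨i, hi, j, hj, hij⟩ := one_lt_card.mp (occ_eq_card_occSet T S ▸ h)
  wlog hlt : i < j generalizing i j
  · exact this j hj i hi hij.symm (by omega)
  obtain ⟨a, ha⟩ := exists_mem_occSet_append_singleton hi
    (by have := add_length_le_of_mem_occSet hj; omega)
  exact card_pos.mpr ⟨a, mem_filter.mpr ⟨mem_univ a, occ_pos_iff.mp (card_pos.mpr ⟨i, ha⟩)⟩⟩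

theorem lext_le_rext_nil (T S : List α) : lext T S ≤ rext T [] :=
  card_le_card (monotone_filter_right _ fun _ _ h => List.IsInfix.trans ⟨[], S, rfl⟩ h)

theorem rext_nil_le_er (T : List α) : rext T [] ≤ er T := by
  rcases eq_or_ne T [] with rfl | hT
  · simp [rext]
  · exact single_le_sum (f := rext T) (fun _ _ => Nat.zero_le _) (nil_mem_MRset hT)

theorem el_le_rext_nil_mul_er (T : List α) : el T ≤ rext T [] * er T := by
  rw [el, er, mul_sum]
  refine sum_le_sum fun S hS => ?_
  calc lext T S ≤ rext T [] * 1 := (lext_le_rext_nil T S).trans_eq (mul_one _).symm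
    _ ≤ rext T [] * rext T S := by
      gcongr
      exact rext_pos_of_two_le_occ (mem_MRset.mp hS).1

theorem lext_eq_rext_reverse (T S : List α) : lext T S = rext T.reverse S.reverse := by
  simp only [lext, rext, ← List.reverse_cons, List.reverse_infix]

theorem el_eq_er_reverse (T : List α) : el T = er T.reverse := by
  refine sum_nbij' List.reverse List.reverse (fun S hS => ?_) (fun S hS => ?_) (by simp) (by simp)
    (fun S _ => lext_eq_rext_reverse T S)
  · simpa [mem_MRset, maxRepeat_reverse_iff] using hS
  · rw [mem_MRset, ← maxRepeat_reverse_iff, List.reverse_reverse]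
    exact mem_MRset.mp hS

end MaximalRepeats

section SuffixTreeBound

variable [DecidableEq α] {T S S' W W' : List α} {i : ℕ} {c c' : α}

noncomputable def firstOcc (T S : List α) : ℕ := sInf (occSet T S : Set ℕ)

theorem firstOcc_mem (h : S <:+: T) : firstOcc T S ∈ occSet T S :=
  Nat.sInf_mem (card_pos.mp (occ_pos_iff.mpr h))

theorem firstOcc_le (h : i ∈ occSet T S) : firstOcc T S ≤ i :=
  Nat.sInf_le h

theorem firstOcc_eq_of_prefix (hS : S' <+: S) (h : firstOcc T S' ∈ occSet T S) :
    firstOcc T S = firstOcc T S' :=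
  (firstOcc_le h).antisymm
    (le_csInf ⟨_, h⟩ fun _ hj => firstOcc_le (occSet_subset_of_prefix hS hj))

/-- The idea of the bound on branching infixes: if `W ++ [c]` is a proper prefix of `W'`, the
first occurrences of `W ++ [c]` and of `W'` coincide, so `W' ++ [c']` can share that first
occurrence only when `c'` is the letter following the first occurrence of `W'`. -/
theorem firstOcc_append_singleton_ne (hc : W ++ [c] <:+: T) (hc' : W' ++ [c'] <:+: T)
    (hnext : T[firstOcc T W' + W'.length]? ≠ some c') (hlt : W.length < W'.length) :
    firstOcc T (W ++ [c]) ≠ firstOcc T (W' ++ [c']) := by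
  intro heq
  have hp' := firstOcc_mem hc'
  have hp := heq ▸ firstOcc_mem hc
  have hpre : W ++ [c] <+: W' :=
    List.prefix_of_prefix_length_le (mem_occSet.mp hp).2
      (List.prefix_append W' [c'] |>.trans (mem_occSet.mp hp').2) (by simpa using hlt)
  have hW' : firstOcc T (W ++ [c]) ∈ occSet T W' :=
    heq ▸ occSet_subset_of_prefix (List.prefix_append W' [c']) hp'
  rw [firstOcc_eq_of_prefix hpre hW', heq, getElem?_eq_of_mem_occSet_append_singleton hp'] at hnext
  exact hnext rfl

theorem card_filter_two_le_rext_le [Fintype α] (T : List α) :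
    ((infixes T).filter fun W => 2 ≤ rext T W).card ≤ T.length := by
  have hchoice : ∀ W ∈ (infixes T).filter fun W => 2 ≤ rext T W, ∃ p, ∃ c,
      p = firstOcc T (W ++ [c]) ∧ W ++ [c] <:+: T ∧ T[firstOcc T W + W.length]? ≠ some c := by
    intro W hW
    obtain ⟨a, ha, b, hb, hab⟩ := one_lt_card.mp (mem_filter.mp hW).2
    by_cases hnext : T[firstOcc T W + W.length]? = some a
    · exact ⟨_, b, rfl, (mem_filter.mp hb).2, hnext ▸ fun h => hab (Option.some_injective _ h)⟩
    · exact ⟨_, a, rfl, (mem_filter.mp ha).2, hnext⟩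
  choose! p hp using hchoice
  refine (card_le_card_of_injOn p (fun W hW => ?_) (fun W hW W' hW' heq => ?_)).trans
    (card_range _).le
  · obtain ⟨c, hpc, hc, -⟩ := hp W hW
    rw [hpc]
    have := add_length_le_of_mem_occSet (firstOcc_mem hc)
    simp only [coe_range, Set.mem_Iio, List.length_append, List.length_singleton] at this ⊢
    omega
  · obtain ⟨c, hpW, hc, hnext⟩ := hp W hW
    obtain ⟨c', hpW', hc', hnext'⟩ := hp W' hW'
    rw [hpW, hpW'] at heq
    rcases lt_trichotomy W.length W'.length with hlt | hlen | hlt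
    · exact absurd heq (firstOcc_append_singleton_ne hc hc' hnext' hlt)
    · have h := (mem_occSet.mp (firstOcc_mem hc)).2
      have h' := (mem_occSet.mp (firstOcc_mem hc')).2
      rw [heq] at h
      have hlen' : (W ++ [c]).length = (W' ++ [c']).length := by simp [hlen]
      exact (List.append_inj'
        ((List.prefix_of_prefix_length_le h h' hlen'.le).eq_of_length hlen') rfl).1
    · exact absurd heq.symm (firstOcc_append_singleton_ne hc' hc hnext hlt)

end SuffixTreeBound

section ExtensionCount

variable [DecidableEq α] [Fintype α] {T : List α}

/-- Extend `X` by its right extension while there is exactly one: this keeps its occurrences. -/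
theorem exists_prefix_occ_eq_suffix_or_two_le_rext {X : List α} (hX : X <:+: T) :
    ∃ W, X <+: W ∧ occ T W = occ T X ∧ (W <:+ T ∨ 2 ≤ rext T W) := by
  by_cases hs : X <:+ T
  · exact ⟨X, List.prefix_rfl, rfl, .inl hs⟩
  by_cases hb : 2 ≤ rext T X
  · exact ⟨X, List.prefix_rfl, rfl, .inr hb⟩
  have hext : ∀ j ∈ occSet T X, ∃ b, j ∈ occSet T (X ++ [b]) := fun j hj =>
    exists_mem_occSet_append_singleton hj (add_length_lt_of_mem_occSet hj hs)
  obtain ⟨i, hi⟩ := card_pos.mp (occ_pos_iff.mpr hX)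
  have hlt := add_length_lt_of_mem_occSet hi hs
  obtain ⟨a, hrext⟩ : ∃ a, (univ.filter fun b => X ++ [b] <:+: T) = {a} := by
    obtain ⟨b, hb'⟩ := hext i hi
    refine card_eq_one.mp (le_antisymm (by rw [rext] at hb; omega) (card_pos.mpr ⟨b, ?_⟩))
    exact mem_filter.mpr ⟨mem_univ b, occ_pos_iff.mp (card_pos.mpr ⟨i, hb'⟩)⟩
  have hocc : occ T (X ++ [a]) = occ T X := by
    refine congrArg card ((occSet_subset_of_prefix (List.prefix_append X [a])).antisymm
      fun j hj => ?_)
    obtain ⟨b, hb'⟩ := hext j hj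
    have : b ∈ univ.filter fun b => X ++ [b] <:+: T :=
      mem_filter.mpr ⟨mem_univ b, occ_pos_iff.mp (card_pos.mpr ⟨j, hb'⟩)⟩
    rw [hrext, mem_singleton] at this
    exact this ▸ hb'
  obtain ⟨W, hpre, hW, hsb⟩ :=
    exists_prefix_occ_eq_suffix_or_two_le_rext (X := X ++ [a])
      (occ_pos_iff.mp (hocc ▸ occ_pos_iff.mpr hX : 0 < occ T (X ++ [a])))
  exact ⟨W, (List.prefix_append X [a]).trans hpre, hW.trans hocc, hsb⟩
termination_by T.length - X.length
decreasing_by simp; omega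

theorem card_le_two_mul_length_of_prefix_occ_eq {F : Finset (List α)}
    (hF : ∀ X ∈ F, X <:+: T ∧ X ≠ [])
    (hocc : ∀ X ∈ F, ∀ Y ∈ F, X <+: Y → occ T Y = occ T X → X = Y) :
    F.card ≤ 2 * T.length := by
  choose! W hXW hWocc hW using fun X hX => exists_prefix_occ_eq_suffix_or_two_le_rext (hF X hX).1
  have hmaps : Set.MapsTo W F
      ((range T.length).image T.drop ∪ (infixes T).filter fun V => 2 ≤ rext T V : Finset _) := by
    intro X hX
    rw [mem_coe]
    have hne : W X ≠ [] := fun h => (hF X hX).2 (List.prefix_nil.mp (h ▸ hXW X hX))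
    rcases hW X hX with hs | hb
    · refine mem_union_left _ (mem_image.mpr ⟨T.length - (W X).length, ?_, ?_⟩)
      · have := List.length_pos_iff.mpr hne
        simp only [mem_range]
        have := hs.length_le
        omega
      · exact (List.suffix_iff_eq_drop.mp hs).symm
    · refine mem_union_right _ (mem_filter.mpr ⟨mem_infixes.mpr (occ_pos_iff.mp ?_), hb⟩)
      rw [hWocc X hX]
      exact occ_pos_iff.mpr (hF X hX).1
  have hinj : Set.InjOn W F := by
    intro X hX Y hY hXY
    have hXY' : Y <+: W X := hXY ▸ hXW Y hY
    have hocc' : occ T Y = occ T X := by rw [← hWocc X hX, ← hWocc Y hY, hXY]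
    rcases le_total X.length Y.length with hle | hle
    · exact hocc X hX Y hY (List.prefix_of_prefix_length_le (hXW X hX) hXY' hle) hocc'
    · exact (hocc Y hY X hX (List.prefix_of_prefix_length_le hXY' (hXW X hX) hle) hocc'.symm).symm
  calc F.card ≤ _ := card_le_card_of_injOn W hmaps hinj
    _ ≤ ((range T.length).image T.drop).card + _ := card_union_le _ _
    _ ≤ T.length + T.length :=
      add_le_add (card_image_le.trans (card_range _).le) (card_filter_two_le_rext_le T)
    _ = 2 * T.length := (two_mul _).symm

theorem er_le_two_mul_length (T : List α) : er T ≤ 2 * T.length := by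
  let E := (MRset T).sigma fun S => univ.filter fun a => S ++ [a] <:+: T
  have hinj : Function.Injective fun e : (_ : List α) × α => e.1 ++ [e.2] := by
    rintro ⟨S, a⟩ ⟨S', a'⟩ h
    obtain ⟨rfl, h⟩ := List.append_inj' h rfl
    simp_all
  rw [show er T = E.card from (card_sigma _ _).symm, ← card_image_of_injective E hinj]
  refine card_le_two_mul_length_of_prefix_occ_eq (fun X hX => ?_)
    (fun X hX Y hY hXY hocc => ?_)
  · obtain ⟨⟨S, a⟩, he, rfl⟩ := mem_image.mp hX
    exact ⟨(mem_filter.mp (mem_sigma.mp he).2).2, by simp⟩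
  · obtain ⟨⟨S', b⟩, he, rfl⟩ := mem_image.mp hY
    by_contra hne
    have hXS' : X <+: S' := (List.prefix_concat_iff.mp hXY).resolve_left hne
    have := ((mem_MRset.mp (mem_sigma.mp he).1).2 b).2.trans_le (occ_le_of_prefix hXS')
    exact this.ne hocc

end ExtensionCount

theorem el_sq_le_two_n_er_sq_general [DecidableEq α] [Fintype α] (T : List α) :
    (el T) ^ 2 ≤ 2 * T.length * (er T) ^ 2 := by
  have hel : el T ≤ 2 * T.length := by
    simpa [el_eq_er_reverse] using er_le_two_mul_length T.reverse
  calc el T ^ 2 = el T * el T := sq _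
    _ ≤ rext T [] * er T * (2 * T.length) := Nat.mul_le_mul (el_le_rext_nil_mul_er T) hel
    _ ≤ er T * er T * (2 * T.length) := by gcongr; exact rext_nil_le_er T
    _ = 2 * T.length * er T ^ 2 := by ring

/-- `el(T)/er(T) ≤ √(2n)`, i.e. `el(T)² ≤ 2n · er(T)²`. -/
theorem el_sq_le_two_n_er_sq [DecidableEq α] [Fintype α] (T : List α) (h : 2 ≤ T.length) :
    (el T) ^ 2 ≤ 2 * T.length * (er T) ^ 2 :=
  el_sq_le_two_n_er_sq_general T
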